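/- The number of subsets of size k of the vertex set of a cycle with N vertices containing no two adjacent vertices equals (N/(N-k)) * binomial(N-k, k), for 0 ≤ k ≤ ⌊N/2⌋ and N ≥ 3 (with k < N). -/

import Mathlib

def pathSets (m k : ℕ) : Finset (Finset ℕ) :=
  (Finset.range m).powerset.filter (fun S => S.card = k ∧ ∀ i ∈ S, i + 1 ∉ S)

lemma mem_pathSets {m k : ℕ} {S : Finset ℕ} :
    S ∈ pathSets m k ↔ S ⊆ Finset.range m ∧ S.card = k ∧ ∀ i ∈ S, i + 1 ∉ S := by
  simp [pathSets, and_assoc]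

lemma pathSets_k0 (m : ℕ) : pathSets m 0 = {∅} := by
  ext S
  simp only [mem_pathSets, Finset.card_eq_zero, Finset.mem_singleton]
  constructor
  · rintro ⟨-, rfl, -⟩; rfl
  · rintro rfl; simp

theorem card_pathSets : ∀ m k, (pathSets m k).card = Nat.choose (m + 1 - k) k := by
  intro m
  induction m using Nat.strong_induction_on with
  | _ m ih =>
    match m with
    | 0 =>
      intro k
      match k with
      | 0 => rw [pathSets_k0]; simp
      | k + 1 =>
        have : pathSets 0 (k + 1) = ∅ := by
          ext S
          simp only [mem_pathSets, Finset.range_zero, Finset.subset_empty,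
            Finset.notMem_empty, iff_false, not_and]
          rintro rfl; simp
        rw [this]
        simp [Nat.choose_eq_zero_of_lt]
    | 1 =>
      intro k
      match k with
      | 0 => rw [pathSets_k0]; simp
      | 1 =>
        have : pathSets 1 1 = {{0}} := by
          ext S
          simp only [mem_pathSets, Finset.mem_singleton]
          constructor
          · rintro ⟨hsub, hcard, -⟩
            apply Finset.eq_of_subset_of_card_le
            · simpa [Finset.range_one] using hsub
            · simp [hcard]
          · rintro rfl
            refine ⟨by simp [Finset.range_one], by simp, ?_⟩
            intro i hi
            simp only [Finset.mem_singleton] at hi ⊢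
            omega
        rw [this]; simp
      | k + 2 =>
        have : pathSets 1 (k + 2) = ∅ := by
          ext S
          simp only [mem_pathSets, Finset.notMem_empty, iff_false, not_and]
          intro hsub hcard
          have := Finset.card_le_card hsub
          simp [Finset.range_one] at this
          omega
        rw [this]
        rw [Nat.choose_eq_zero_of_lt (by omega)]
        simp
    | m + 2 =>
      intro k
      match k with
      | 0 => rw [pathSets_k0]; simp
      | k + 1 =>
        have hsplit := Finset.card_filter_add_card_filter_not
          (s := pathSets (m + 2) (k + 1)) (fun S => m + 1 ∈ S)
        have h1 : Finset.filter (fun S => ¬ m + 1 ∈ S) (pathSets (m + 2) (k + 1))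
            = pathSets (m + 1) (k + 1) := by
          ext S
          simp only [Finset.mem_filter, mem_pathSets]
          constructor
          · rintro ⟨⟨hsub, hcard, hind⟩, hnm⟩
            refine ⟨?_, hcard, hind⟩
            intro a ha
            have := hsub ha
            simp only [Finset.mem_range] at this ⊢
            have : a ≠ m + 1 := fun h => hnm (h ▸ ha)
            omega
          · rintro ⟨hsub, hcard, hind⟩
            refine ⟨⟨fun a ha => ?_, hcard, hind⟩, fun hmem => ?_⟩
            · have := hsub ha
              simp only [Finset.mem_range] at this ⊢
              omega
            · have := hsub hmem
              simp at this
        have h2 : (Finset.filter (fun S => m + 1 ∈ S) (pathSets (m + 2) (k + 1))).card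
            = (pathSets m k).card := by
          refine Finset.card_bij' (fun S _ => S.erase (m + 1)) (fun T _ => insert (m + 1) T)
            ?hi ?hj ?left ?right
          case hi =>
            rintro S hS
            simp only [Finset.mem_filter, mem_pathSets] at hS
            obtain ⟨⟨hsub, hcard, hind⟩, hmem⟩ := hS
            rw [mem_pathSets]
            refine ⟨?_, ?_, ?_⟩
            · intro a ha
              rw [Finset.mem_erase] at ha
              obtain ⟨hane, haS⟩ := ha
              have h1 := hsub haS
              simp only [Finset.mem_range] at h1 ⊢
              have : a ≠ m := by
                rintro rfl
                exact hind a haS hmem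
              omega
            · rw [Finset.card_erase_of_mem hmem, hcard]; omega
            · intro i hi
              rw [Finset.mem_erase] at hi
              intro hcon
              rw [Finset.mem_erase] at hcon
              exact hind i hi.2 hcon.2
          case hj =>
            rintro T hT
            rw [mem_pathSets] at hT
            obtain ⟨hsub, hcard, hind⟩ := hT
            have hnm : m + 1 ∉ T := fun h => by simpa using Finset.mem_range.mp (hsub h)
            simp only [Finset.mem_filter, mem_pathSets]
            refine ⟨⟨?_, ?_, ?_⟩, by simp⟩
            · intro a ha
              rw [Finset.mem_insert] at ha
              rcases ha with rfl | ha
              · simp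
              · have := Finset.mem_range.mp (hsub ha)
                simp only [Finset.mem_range]; omega
            · rw [Finset.card_insert_of_notMem hnm, hcard]
            · intro i hi hcon
              rw [Finset.mem_insert] at hi hcon
              rcases hi with rfl | hi
              · rcases hcon with h | h
                · omega
                · have := Finset.mem_range.mp (hsub h); omega
              · rcases hcon with h | h
                · have := Finset.mem_range.mp (hsub hi); omega
                · exact hind i hi h
          case left =>
            rintro S hS
            simp only [Finset.mem_filter] at hS
            exact Finset.insert_erase hS.2
          case right =>
            rintro T hT
            rw [mem_pathSets] at hT
            have hnm : m + 1 ∉ T := fun h => by simpa using Finset.mem_range.mp (hT.1 h)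
            exact Finset.erase_insert hnm
        rw [h1] at hsplit
        have hfin : (pathSets (m + 2) (k + 1)).card
            = (pathSets m k).card + (pathSets (m + 1) (k + 1)).card := by omega
        rw [hfin, ih m (by omega) k, ih (m + 1) (by omega) (k + 1)]
        by_cases hkm : k ≤ m + 1
        · have e1 : m + 2 + 1 - (k + 1) = (m + 1 - k) + 1 := by omega
          have e2 : m + 1 + 1 - (k + 1) = m + 1 - k := by omega
          rw [e1, e2, Nat.choose_succ_succ]
        · have e1 : m + 1 - k = 0 := by omega
          have e2 : m + 2 + 1 - (k + 1) = m + 2 - k := by omega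
          rw [e1, e2]
          rw [Nat.choose_eq_zero_of_lt (by omega), Nat.choose_eq_zero_of_lt (by omega),
            Nat.choose_eq_zero_of_lt (by omega)]
lemma natCast_val_zmod {N : ℕ} [NeZero N] (x : ZMod N) : ((x.val : ℕ) : ZMod N) = x :=
  ZMod.natCast_rightInverse x

lemma eq_add_one_of_val_eq {N : ℕ} [NeZero N] {x y : ZMod N} (h : y.val = x.val + 1) :
    y = x + 1 := by
  have hx := natCast_val_zmod x
  have hy := natCast_val_zmod y
  rw [← hy, h]
  push_cast
  rw [hx]

lemma cast_ne_zero_of_lt {N a : ℕ} [NeZero N] (h0 : 0 < a) (h : a < N) :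
    ((a : ℕ) : ZMod N) ≠ 0 := by
  intro hcon
  rw [ZMod.natCast_eq_zero_iff] at hcon
  have := Nat.le_of_dvd h0 hcon
  omega

lemma cycleA (N k : ℕ) [NeZero N] (hN : 3 ≤ N) :
    ((Finset.univ.filter
        (fun S : Finset (ZMod N) => S.card = k ∧ ∀ i : ZMod N, ¬(i ∈ S ∧ i + 1 ∈ S))).filter
        (fun S => ¬ (0 : ZMod N) ∈ S)).card = (pathSets (N - 1) k).card := by
  refine Finset.card_bij' (fun S _ => S.image (fun x : ZMod N => x.val - 1))
    (fun T _ => T.image (fun a : ℕ => ((a + 1 : ℕ) : ZMod N))) ?hi ?hj ?left ?right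
  case hi =>
    intro S hS
    simp only [Finset.mem_filter, Finset.mem_univ, true_and] at hS
    obtain ⟨⟨hcard, hind⟩, h0⟩ := hS
    have hval1 : ∀ x ∈ S, 1 ≤ x.val := by
      intro x hx
      have hx0 : x ≠ 0 := fun h => h0 (h ▸ hx)
      have := (ZMod.val_eq_zero x).not.mpr hx0
      omega
    have hinj : Set.InjOn (fun x : ZMod N => x.val - 1) ↑S := by
      intro x hx y hy h
      apply ZMod.val_injective
      have h1 := hval1 x hx
      have h2 := hval1 y hy
      simp only at h
      omega
    rw [mem_pathSets]
    refine ⟨?_, ?_, ?_⟩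
    · intro b hb
      simp only [Finset.mem_image] at hb
      obtain ⟨x, hx, rfl⟩ := hb
      have := ZMod.val_lt x
      have := hval1 x hx
      simp only [Finset.mem_range]
      omega
    · rw [Finset.card_image_of_injOn hinj, hcard]
    · intro b hb hb1
      simp only [Finset.mem_image] at hb hb1
      obtain ⟨x, hx, hxe⟩ := hb
      obtain ⟨y, hy, hye⟩ := hb1
      have h1 := hval1 x hx
      have h2 := hval1 y hy
      have h3 : y.val = x.val + 1 := by omega
      exact hind x ⟨hx, (eq_add_one_of_val_eq h3) ▸ hy⟩
  case hj =>
    intro T hT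
    rw [mem_pathSets] at hT
    obtain ⟨hsub, hcard, hind⟩ := hT
    have hlt : ∀ a ∈ T, a < N - 1 := fun a ha => Finset.mem_range.mp (hsub ha)
    have hinj : Set.InjOn (fun a : ℕ => ((a + 1 : ℕ) : ZMod N)) ↑T := by
      intro a ha b hb h
      have h1 : ((a + 1 : ℕ) : ZMod N).val = a + 1 :=
        ZMod.val_cast_of_lt (by have := hlt a ha; omega)
      have h2 : ((b + 1 : ℕ) : ZMod N).val = b + 1 :=
        ZMod.val_cast_of_lt (by have := hlt b hb; omega)
      simp only at h
      rw [h] at h1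
      omega
    simp only [Finset.mem_filter, Finset.mem_univ, true_and]
    refine ⟨⟨?_, ?_⟩, ?_⟩
    · rw [Finset.card_image_of_injOn hinj, hcard]
    · intro i
      rintro ⟨hi, hi1⟩
      simp only [Finset.mem_image] at hi hi1
      obtain ⟨a, ha, hae⟩ := hi
      obtain ⟨b, hb, hbe⟩ := hi1
      have hab : ((b + 1 : ℕ) : ZMod N) = ((a + 2 : ℕ) : ZMod N) := by
        rw [hbe, ← hae]; push_cast; ring
      have h1 : ((b + 1 : ℕ) : ZMod N).val = b + 1 :=
        ZMod.val_cast_of_lt (by have := hlt b hb; omega)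
      by_cases hA : a + 2 < N
      · have h2 : ((a + 2 : ℕ) : ZMod N).val = a + 2 := ZMod.val_cast_of_lt hA
        rw [hab, h2] at h1
        have : b = a + 1 := by omega
        exact hind a ha (this ▸ hb)
      · have ha2 : a + 2 = N := by have := hlt a ha; omega
        rw [hab, ha2, ZMod.natCast_self, ZMod.val_zero] at h1
        omega
    · intro hcon
      simp only [Finset.mem_image] at hcon
      obtain ⟨a, ha, hae⟩ := hcon
      exact cast_ne_zero_of_lt (by omega) (by have := hlt a ha; omega) hae
  case left =>
    intro S hS
    simp only [Finset.mem_filter, Finset.mem_univ, true_and] at hS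
    obtain ⟨⟨hcard, hind⟩, h0⟩ := hS
    rw [Finset.image_image]
    have heq : Set.EqOn ((fun a : ℕ => ((a + 1 : ℕ) : ZMod N)) ∘ fun x : ZMod N => x.val - 1)
        id ↑S := by
      intro x hx
      simp only [Function.comp, id]
      have hx0 : x ≠ 0 := fun h => h0 (h ▸ (Finset.mem_coe.mp hx))
      have h1 : x.val ≠ 0 := fun h => hx0 ((ZMod.val_eq_zero x).mp h)
      have h2 : x.val - 1 + 1 = x.val := by omega
      rw [h2, natCast_val_zmod]
    rw [Finset.image_congr heq, Finset.image_id]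
  case right =>
    intro T hT
    rw [mem_pathSets] at hT
    obtain ⟨hsub, -, -⟩ := hT
    rw [Finset.image_image]
    have heq : Set.EqOn ((fun x : ZMod N => x.val - 1) ∘ fun a : ℕ => ((a + 1 : ℕ) : ZMod N))
        id ↑T := by
      intro a ha
      simp only [Function.comp, id]
      have : a < N - 1 := Finset.mem_range.mp (hsub (Finset.mem_coe.mp ha))
      rw [ZMod.val_cast_of_lt (by omega)]
      omega
    rw [Finset.image_congr heq, Finset.image_id]

lemma cycleB (N k : ℕ) [NeZero N] (hN : 3 ≤ N) :
    ((Finset.univ.filter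
        (fun S : Finset (ZMod N) => S.card = k + 1 ∧ ∀ i : ZMod N, ¬(i ∈ S ∧ i + 1 ∈ S))).filter
        (fun S => (0 : ZMod N) ∈ S)).card = (pathSets (N - 3) k).card := by
  refine Finset.card_bij' (fun S _ => (S.erase 0).image (fun x : ZMod N => x.val - 2))
    (fun T _ => insert (0 : ZMod N) (T.image (fun a : ℕ => ((a + 2 : ℕ) : ZMod N))))
    ?hi ?hj ?left ?right
  case hi =>
    intro S hS
    simp only [Finset.mem_filter, Finset.mem_univ, true_and] at hS
    obtain ⟨⟨hcard, hind⟩, h0S⟩ := hS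
    have hbound : ∀ x ∈ S.erase 0, 2 ≤ x.val ∧ x.val ≤ N - 2 := by
      intro x hx
      rw [Finset.mem_erase] at hx
      obtain ⟨hx0, hxS⟩ := hx
      have hv0 : x.val ≠ 0 := fun h => hx0 ((ZMod.val_eq_zero x).mp h)
      have hvlt : x.val < N := ZMod.val_lt x
      have hv1 : x.val ≠ 1 := by
        intro h
        have hx1 : x = (0 : ZMod N) + 1 := by
          rw [← natCast_val_zmod x, h, zero_add, Nat.cast_one]
        exact hind 0 ⟨h0S, hx1 ▸ hxS⟩
      have hvN : x.val ≠ N - 1 := by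
        intro h
        have hx1 : x + 1 = 0 := by
          rw [← natCast_val_zmod x, h]
          have he : ((N - 1 : ℕ) : ZMod N) + 1 = ((N - 1 + 1 : ℕ) : ZMod N) := by
            push_cast; ring
          rw [he, show N - 1 + 1 = N by omega, ZMod.natCast_self]
        exact hind x ⟨hxS, hx1 ▸ h0S⟩
      omega
    have hinj : Set.InjOn (fun x : ZMod N => x.val - 2) ↑(S.erase 0) := by
      intro x hx y hy h
      apply ZMod.val_injective
      have h1 := hbound x (Finset.mem_coe.mp hx)
      have h2 := hbound y (Finset.mem_coe.mp hy)
      simp only at h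
      omega
    rw [mem_pathSets]
    refine ⟨?_, ?_, ?_⟩
    · intro b hb
      simp only [Finset.mem_image] at hb
      obtain ⟨x, hx, rfl⟩ := hb
      have := hbound x hx
      simp only [Finset.mem_range]
      omega
    · rw [Finset.card_image_of_injOn hinj, Finset.card_erase_of_mem h0S, hcard]
      omega
    · intro b hb hb1
      simp only [Finset.mem_image] at hb hb1
      obtain ⟨x, hx, hxe⟩ := hb
      obtain ⟨y, hy, hye⟩ := hb1
      have h1 := hbound x hx
      have h2 := hbound y hy
      have h3 : y.val = x.val + 1 := by omega
      rw [Finset.mem_erase] at hx hy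
      exact hind x ⟨hx.2, (eq_add_one_of_val_eq h3) ▸ hy.2⟩
  case hj =>
    intro T hT
    rw [mem_pathSets] at hT
    obtain ⟨hsub, hcard, hind⟩ := hT
    have hlt : ∀ a ∈ T, a < N - 3 := fun a ha => Finset.mem_range.mp (hsub ha)
    have h0img : (0 : ZMod N) ∉ T.image (fun a : ℕ => ((a + 2 : ℕ) : ZMod N)) := by
      intro hcon
      simp only [Finset.mem_image] at hcon
      obtain ⟨a, ha, hae⟩ := hcon
      exact cast_ne_zero_of_lt (by omega) (by have := hlt a ha; omega) hae
    have hinj : Set.InjOn (fun a : ℕ => ((a + 2 : ℕ) : ZMod N)) ↑T := by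
      intro a ha b hb h
      have h1 : ((a + 2 : ℕ) : ZMod N).val = a + 2 :=
        ZMod.val_cast_of_lt (by have := hlt a ha; omega)
      have h2 : ((b + 2 : ℕ) : ZMod N).val = b + 2 :=
        ZMod.val_cast_of_lt (by have := hlt b hb; omega)
      simp only at h
      rw [h] at h1
      omega
    simp only [Finset.mem_filter, Finset.mem_univ, true_and]
    refine ⟨⟨?_, ?_⟩, Finset.mem_insert_self _ _⟩
    · rw [Finset.card_insert_of_notMem h0img, Finset.card_image_of_injOn hinj, hcard]
    · intro i
      rintro ⟨hi, hi1⟩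
      rw [Finset.mem_insert] at hi hi1
      have hone : ((1 : ℕ) : ZMod N).val = 1 := ZMod.val_cast_of_lt (by omega)
      rcases hi with rfl | hi
      · rw [zero_add] at hi1
        rcases hi1 with h | h
        · exact cast_ne_zero_of_lt (N := N) (a := 1) (by omega) (by omega)
            (by rw [Nat.cast_one]; exact h)
        · simp only [Finset.mem_image] at h
          obtain ⟨b, hb, hbe⟩ := h
          have h2 : ((b + 2 : ℕ) : ZMod N).val = b + 2 :=
            ZMod.val_cast_of_lt (by have := hlt b hb; omega)
          rw [show ((1 : ZMod N)) = ((1 : ℕ) : ZMod N) by rw [Nat.cast_one]] at hbe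
          rw [hbe, hone] at h2
          omega
      · simp only [Finset.mem_image] at hi
        obtain ⟨a, ha, hae⟩ := hi
        have hstep : i + 1 = ((a + 3 : ℕ) : ZMod N) := by
          rw [← hae]; push_cast; ring
        rcases hi1 with h | h
        · rw [hstep] at h
          exact cast_ne_zero_of_lt (by omega) (by have := hlt a ha; omega) h
        · simp only [Finset.mem_image] at h
          obtain ⟨b, hb, hbe⟩ := h
          rw [hstep] at hbe
          have h1 : ((a + 3 : ℕ) : ZMod N).val = a + 3 :=
            ZMod.val_cast_of_lt (by have := hlt a ha; omega)
          have h2 : ((b + 2 : ℕ) : ZMod N).val = b + 2 :=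
            ZMod.val_cast_of_lt (by have := hlt b hb; omega)
          rw [hbe, h1] at h2
          have : b = a + 1 := by omega
          exact hind a ha (this ▸ hb)
  case left =>
    intro S hS
    simp only [Finset.mem_filter, Finset.mem_univ, true_and] at hS
    obtain ⟨⟨hcard, hind⟩, h0S⟩ := hS
    have hbound : ∀ x ∈ S.erase 0, 2 ≤ x.val := by
      intro x hx
      rw [Finset.mem_erase] at hx
      obtain ⟨hx0, hxS⟩ := hx
      have hv0 : x.val ≠ 0 := fun h => hx0 ((ZMod.val_eq_zero x).mp h)
      have hv1 : x.val ≠ 1 := by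
        intro h
        have hx1 : x = (0 : ZMod N) + 1 := by
          rw [← natCast_val_zmod x, h, zero_add, Nat.cast_one]
        exact hind 0 ⟨h0S, hx1 ▸ hxS⟩
      omega
    rw [Finset.image_image]
    have heq : Set.EqOn ((fun a : ℕ => ((a + 2 : ℕ) : ZMod N)) ∘ fun x : ZMod N => x.val - 2)
        id ↑(S.erase 0) := by
      intro x hx
      simp only [Function.comp, id]
      have h2 := hbound x (Finset.mem_coe.mp hx)
      have h3 : x.val - 2 + 2 = x.val := by omega
      rw [h3, natCast_val_zmod]
    rw [Finset.image_congr heq, Finset.image_id, Finset.insert_erase h0S]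
  case right =>
    intro T hT
    rw [mem_pathSets] at hT
    obtain ⟨hsub, -, -⟩ := hT
    have hlt : ∀ a ∈ T, a < N - 3 := fun a ha => Finset.mem_range.mp (hsub ha)
    have h0img : (0 : ZMod N) ∉ T.image (fun a : ℕ => ((a + 2 : ℕ) : ZMod N)) := by
      intro hcon
      simp only [Finset.mem_image] at hcon
      obtain ⟨a, ha, hae⟩ := hcon
      exact cast_ne_zero_of_lt (by omega) (by have := hlt a ha; omega) hae
    rw [Finset.erase_insert h0img, Finset.image_image]
    have heq : Set.EqOn ((fun x : ZMod N => x.val - 2) ∘ fun a : ℕ => ((a + 2 : ℕ) : ZMod N))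
        id ↑T := by
      intro a ha
      simp only [Function.comp, id]
      have : a < N - 3 := hlt a (Finset.mem_coe.mp ha)
      rw [ZMod.val_cast_of_lt (by omega)]
      omega
    rw [Finset.image_congr heq, Finset.image_id]

/-- The number of independent sets of size `k` on the cycle with `N` vertices
(vertices `ZMod N`, `i` adjacent to `i+1` mod `N`) equals `(N/(N-k)) * choose (N-k) k`. -/
theorem cycle_independent_set_count (N k : ℕ) [NeZero N] (hN : 3 ≤ N) (hk : k ≤ N / 2)
    (hkN : k < N) :
    ((Finset.univ.filter
        (fun S : Finset (ZMod N) => S.card = k ∧ ∀ i : ZMod N, ¬(i ∈ S ∧ i + 1 ∈ S))).card : ℚ)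
      = (N : ℚ) / ((N : ℚ) - (k : ℚ)) * (Nat.choose (N - k) k : ℚ) := by
  have h2k : 2 * k ≤ N := by omega
  by_cases hk0 : k = 0
  · subst hk0
    have hKe : Finset.univ.filter
        (fun S : Finset (ZMod N) => S.card = 0 ∧ ∀ i : ZMod N, ¬(i ∈ S ∧ i + 1 ∈ S)) = {∅} := by
      ext S
      simp only [Finset.mem_filter, Finset.mem_univ, true_and, Finset.mem_singleton,
        Finset.card_eq_zero]
      constructor
      · rintro ⟨rfl, -⟩; rfl
      · rintro rfl; exact ⟨rfl, by simp⟩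
    rw [hKe]
    have hNne : (N : ℚ) ≠ 0 := Nat.cast_ne_zero.mpr (by omega)
    simp only [Finset.card_singleton, Nat.cast_one, Nat.sub_zero, Nat.choose_zero_right,
      Nat.cast_zero, sub_zero]
    rw [div_self hNne, one_mul]
  · obtain ⟨k', rfl⟩ := Nat.exists_eq_succ_of_ne_zero hk0
    obtain ⟨b, rfl⟩ : ∃ b, N = b + k' + 3 := ⟨N - k' - 3, by omega⟩
    have hsplit := Finset.card_filter_add_card_filter_not
      (s := Finset.univ.filter
        (fun S : Finset (ZMod (b + k' + 3)) =>
          S.card = k' + 1 ∧ ∀ i : ZMod (b + k' + 3), ¬(i ∈ S ∧ i + 1 ∈ S)))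
      (fun S => (0 : ZMod (b + k' + 3)) ∈ S)
    rw [cycleB (b + k' + 3) k' (by omega), cycleA (b + k' + 3) (k' + 1) (by omega),
      card_pathSets, card_pathSets] at hsplit
    rw [show b + k' + 3 - 3 + 1 - k' = b + 1 by omega,
      show b + k' + 3 - 1 + 1 - (k' + 1) = b + 2 by omega] at hsplit
    rw [← hsplit, show b + k' + 3 - (k' + 1) = b + 2 by omega]
    have key := Nat.add_one_mul_choose_eq (b + 1) k'
    have keyQ : ((b : ℚ) + 2) * (Nat.choose (b + 1) k' : ℚ)
        = (Nat.choose (b + 2) (k' + 1) : ℚ) * ((k' : ℚ) + 1) := by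
      exact_mod_cast key
    have hne : ((b + k' + 3 : ℕ) : ℚ) - ((k' + 1 : ℕ) : ℚ) ≠ 0 := by
      push_cast
      intro h
      nlinarith [h]
    rw [div_mul_eq_mul_div, eq_div_iff hne]
    push_cast
    linear_combination keyQ
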